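/- For $z = (r e^{i\phi}, r, s, s)$ with $r, s \ge 0$, $\|z\|_{\mathsf{X}} = 2\sqrt{r^2 + s^2 + 2rs|\cos(\phi/2)|}$. -/

import Mathlib

/-!
Both terms of `Xfun z σ` are lengths of sums `r e^{iθ} + s`, with `θ = σ + φ` and `θ = σ`. By
the law of cosines and concavity of the square root, their sum is at most
`2 √(r² + s² + r s (cos (σ + φ) + cos σ))`, and `cos (σ + φ) + cos σ = 2 cos (σ + φ/2) cos (φ/2)`
is at most `2 |cos (φ/2)|`. At `σ = -φ/2` or `σ = π - φ/2` both cosines equal `|cos (φ/2)|`, so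
every inequality is an equality and the supremum is attained.
-/

open Complex Real

noncomputable def Xfun (z : Fin 4 → ℂ) (σ : ℝ) : ℝ :=
  ‖z 0 * Complex.exp (σ * Complex.I) + (starRingEnd ℂ) (z 3)‖ +
  ‖z 1 * Complex.exp (σ * Complex.I) + (starRingEnd ℂ) (z 2)‖

noncomputable def Xnorm (z : Fin 4 → ℂ) : ℝ := ⨆ σ : ℝ, Xfun z σ

noncomputable def phase (z : Fin 4 → ℂ) : ℝ :=
  (Complex.arg (z 0) + Complex.arg (z 3)) - (Complex.arg (z 1) + Complex.arg (z 2))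

lemma norm_ofReal_mul_exp_add_ofReal (r s θ : ℝ) :
    ‖(r : ℂ) * Complex.exp (θ * Complex.I) + s‖ =
      √(r ^ 2 + s ^ 2 + 2 * r * s * Real.cos θ) := by
  rw [Complex.norm_def, Complex.normSq_apply]
  congr 1
  simp only [add_re, add_im, mul_re, mul_im, ofReal_re, ofReal_im, exp_ofReal_mul_I_re,
    exp_ofReal_mul_I_im]
  nlinarith [Real.sin_sq_add_cos_sq θ]

lemma Xfun_rotated_pair (r s φ σ : ℝ) :
    Xfun ![(r : ℂ) * Complex.exp (φ * Complex.I), (r : ℂ), (s : ℂ), (s : ℂ)] σ =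
      √(r ^ 2 + s ^ 2 + 2 * r * s * Real.cos (σ + φ)) +
        √(r ^ 2 + s ^ 2 + 2 * r * s * Real.cos σ) := by
  have hrot : (r : ℂ) * Complex.exp (φ * Complex.I) * Complex.exp (σ * Complex.I) =
      r * Complex.exp ((σ + φ : ℝ) * Complex.I) := by
    rw [mul_assoc, ← Complex.exp_add]
    push_cast
    ring_nf
  simp only [Xfun, Matrix.cons_val_zero, Matrix.cons_val_one, Matrix.head_cons,
    Matrix.cons_val_two, Matrix.tail_cons, Matrix.cons_val_three, Complex.conj_ofReal, hrot,
    norm_ofReal_mul_exp_add_ofReal]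

lemma sqrt_add_sqrt_le_two_mul_sqrt {x y M : ℝ} (hx : 0 ≤ x) (hy : 0 ≤ y)
    (h : x + y ≤ 2 * M) : √x + √y ≤ 2 * √M := by
  have hM : 0 ≤ M := by linarith
  nlinarith [Real.sq_sqrt hx, Real.sq_sqrt hy, Real.sq_sqrt hM, Real.sqrt_nonneg M,
    sq_nonneg (√x - √y), sq_nonneg (√x + √y - 2 * √M),
    mul_nonneg (Real.sqrt_nonneg M) (add_nonneg (Real.sqrt_nonneg x) (Real.sqrt_nonneg y))]

lemma cos_add_add_cos_le (σ φ : ℝ) : Real.cos (σ + φ) + Real.cos σ ≤ 2 * |Real.cos (φ / 2)| := by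
  have hsum : Real.cos (σ + φ) + Real.cos σ = 2 * (Real.cos (σ + φ / 2) * Real.cos (φ / 2)) := by
    rw [Real.cos_add_cos]
    ring_nf
  calc Real.cos (σ + φ) + Real.cos σ
      ≤ 2 * (|Real.cos (σ + φ / 2)| * |Real.cos (φ / 2)|) := by
        rw [hsum, ← abs_mul]
        gcongr
        exact le_abs_self _
    _ ≤ 2 * (1 * |Real.cos (φ / 2)|) := by gcongr; exact Real.abs_cos_le_one _
    _ = 2 * |Real.cos (φ / 2)| := by ring

lemma exists_cos_add_eq_and_cos_eq_abs_cos_half (φ : ℝ) :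
    ∃ σ, Real.cos (σ + φ) = |Real.cos (φ / 2)| ∧ Real.cos σ = |Real.cos (φ / 2)| := by
  rcases le_or_gt 0 (Real.cos (φ / 2)) with h | h
  · refine ⟨-(φ / 2), ?_, ?_⟩
    · rw [abs_of_nonneg h]; ring_nf
    · rw [abs_of_nonneg h, Real.cos_neg]
  · refine ⟨π - φ / 2, ?_, ?_⟩
    · rw [abs_of_neg h, show π - φ / 2 + φ = π - -(φ / 2) by ring, Real.cos_pi_sub, Real.cos_neg]
    · rw [abs_of_neg h, Real.cos_pi_sub]

lemma isGreatest_range_Xfun_rotated_pair {r s : ℝ} (hr : 0 ≤ r) (hs : 0 ≤ s) (φ : ℝ) :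
    IsGreatest (Set.range
        (Xfun ![(r : ℂ) * Complex.exp (φ * Complex.I), (r : ℂ), (s : ℂ), (s : ℂ)]))
      (2 * √(r ^ 2 + s ^ 2 + 2 * r * s * |Real.cos (φ / 2)|)) := by
  have hrs : 0 ≤ r * s := mul_nonneg hr hs
  have hlaw (θ : ℝ) : 0 ≤ r ^ 2 + s ^ 2 + 2 * r * s * Real.cos θ := by
    nlinarith [Real.neg_one_le_cos θ, sq_nonneg (r - s)]
  refine ⟨?_, ?_⟩
  · obtain ⟨σ, h₁, h₂⟩ := exists_cos_add_eq_and_cos_eq_abs_cos_half φ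
    exact ⟨σ, by rw [Xfun_rotated_pair, h₁, h₂]; ring⟩
  · rintro _ ⟨σ, rfl⟩
    rw [Xfun_rotated_pair]
    refine sqrt_add_sqrt_le_two_mul_sqrt (hlaw _) (hlaw _) ?_
    nlinarith [mul_le_mul_of_nonneg_left (cos_add_add_cos_le σ φ) hrs]

theorem stmt_9 (r s φ : ℝ) (hr : 0 ≤ r) (hs : 0 ≤ s) :
    Xnorm ![(r : ℂ) * Complex.exp (φ * Complex.I), (r : ℂ), (s : ℂ), (s : ℂ)] =
      2 * Real.sqrt (r ^ 2 + s ^ 2 + 2 * r * s * |Real.cos (φ / 2)|) :=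
  (isGreatest_range_Xfun_rotated_pair hr hs φ).csSup_eq
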